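/- arXiv:2310.05296 — 2 statements merged into one kernel-verified Lean document; each statement's English description precedes it below -/
import Mathlib

section
/- For a connected non-bipartite graph, the entrywise limit lim_{k→∞} ((A_rw)^k)_{ij} = π_i holds for all i,j. -/
open Matrix Finset Filter

namespace Stmt11Aux
set_option linter.unusedSectionVars false
set_option maxHeartbeats 1000000

variable {N : ℕ}


lemma row_bounds (hne : (Finset.univ : Finset (Fin N)).Nonempty)
    (M : Matrix (Fin N) (Fin N) ℝ) (h0 : ∀ i j, 0 ≤ M i j) (h1 : ∀ i, ∑ j, M i j = 1)
    (x : Fin N → ℝ) (i : Fin N) :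
    univ.inf' hne x ≤ ∑ j, M i j * x j ∧ ∑ j, M i j * x j ≤ univ.sup' hne x := by
  constructor
  · calc univ.inf' hne x = ∑ j, M i j * univ.inf' hne x := by
          rw [← Finset.sum_mul, h1, one_mul]
    _ ≤ ∑ j, M i j * x j :=
          Finset.sum_le_sum fun j _ => mul_le_mul_of_nonneg_left
            (Finset.inf'_le _ (mem_univ j)) (h0 i j)
  · calc ∑ j, M i j * x j ≤ ∑ j, M i j * univ.sup' hne x :=
          Finset.sum_le_sum fun j _ => mul_le_mul_of_nonneg_left
            (Finset.le_sup' _ (mem_univ j)) (h0 i j)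
    _ = univ.sup' hne x := by rw [← Finset.sum_mul, h1, one_mul]

lemma row_contract (hne : (Finset.univ : Finset (Fin N)).Nonempty)
    (M : Matrix (Fin N) (Fin N) ℝ) {δ : ℝ} (hδ : 0 ≤ δ) (hM : ∀ i j, δ ≤ M i j)
    (h1 : ∀ i, ∑ j, M i j = 1) (x : Fin N → ℝ) (i : Fin N) :
    ∑ j, M i j * x j ≤ univ.sup' hne x - δ * (univ.sup' hne x - univ.inf' hne x) ∧
    univ.inf' hne x + δ * (univ.sup' hne x - univ.inf' hne x) ≤ ∑ j, M i j * x j := by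
  obtain ⟨kmin, _, hkmin⟩ := Finset.exists_mem_eq_inf' hne x
  obtain ⟨kmax, _, hkmax⟩ := Finset.exists_mem_eq_sup' hne x
  have h0 : ∀ a b, (0:ℝ) ≤ M a b := fun a b => le_trans hδ (hM a b)
  set S := univ.sup' hne x with hS
  set I := univ.inf' hne x with hI
  have hIS : I ≤ S := le_trans (Finset.inf'_le _ (mem_univ kmax)) (by rw [hkmax])
  constructor
  · have key : M i kmin * (S - x kmin) ≤ ∑ j, M i j * (S - x j) :=
      Finset.single_le_sum (f := fun j => M i j * (S - x j))
        (fun j _ => mul_nonneg (h0 i j) (sub_nonneg.mpr (Finset.le_sup' _ (mem_univ j))))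
        (mem_univ kmin)
    have hsum : ∑ j, M i j * (S - x j) = S - ∑ j, M i j * x j := by
      simp only [mul_sub]
      rw [Finset.sum_sub_distrib, ← Finset.sum_mul, h1, one_mul]
    have hterm : δ * (S - I) ≤ M i kmin * (S - x kmin) := by
      rw [← hkmin]
      exact mul_le_mul (hM i kmin) le_rfl (sub_nonneg.mpr hIS) (h0 i kmin)
    rw [hsum] at key
    linarith
  · have key : M i kmax * (x kmax - I) ≤ ∑ j, M i j * (x j - I) :=
      Finset.single_le_sum (f := fun j => M i j * (x j - I))
        (fun j _ => mul_nonneg (h0 i j) (sub_nonneg.mpr (Finset.inf'_le _ (mem_univ j))))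
        (mem_univ kmax)
    have hsum : ∑ j, M i j * (x j - I) = (∑ j, M i j * x j) - I := by
      simp only [mul_sub]
      rw [Finset.sum_sub_distrib, ← Finset.sum_mul, h1, one_mul]
    have hterm : δ * (S - I) ≤ M i kmax * (x kmax - I) := by
      rw [← hkmax]
      exact mul_le_mul (hM i kmax) le_rfl (sub_nonneg.mpr hIS) (h0 i kmax)
    rw [hsum] at key
    linarith


lemma pow_row_sum (R : Matrix (Fin N) (Fin N) ℝ) (h1 : ∀ i, ∑ j, R i j = 1) (k : ℕ) :
    ∀ i, ∑ j, (R ^ k) i j = 1 := by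
  induction k with
  | zero => intro i; simp [Matrix.one_apply]
  | succ k ih =>
    intro i
    rw [pow_succ]
    simp only [Matrix.mul_apply]
    rw [Finset.sum_comm]
    calc ∑ v, ∑ j, (R ^ k) i v * R v j = ∑ v, (R ^ k) i v * ∑ j, R v j := by
          simp [Finset.mul_sum]
    _ = 1 := by simp only [h1, mul_one]; exact ih i

lemma pow_nonneg_entries (R : Matrix (Fin N) (Fin N) ℝ) (h0 : ∀ i j, 0 ≤ R i j) (k : ℕ) :
    ∀ i j, 0 ≤ (R ^ k) i j := by
  induction k with
  | zero => intro i j; by_cases h : i = j <;> simp [Matrix.one_apply, h]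
  | succ k ih =>
    intro i j
    rw [pow_succ, Matrix.mul_apply]
    exact Finset.sum_nonneg fun v _ => mul_nonneg (ih i v) (h0 v j)

lemma stochastic_pow_tendsto (hN : 2 ≤ N) (R : Matrix (Fin N) (Fin N) ℝ)
    (h0 : ∀ i j, 0 ≤ R i j) (h1 : ∀ i, ∑ j, R i j = 1)
    (r : ℕ) (hr : 0 < r) (hpos : ∀ i j, 0 < (R ^ r) i j) (j : Fin N) :
    ∃ L : ℝ, ∀ i, Tendsto (fun k => (R ^ k) i j) atTop (nhds L) := by
  have hne : (Finset.univ : Finset (Fin N)).Nonempty := by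
    have h : Nonempty (Fin N) := Fin.pos_iff_nonempty.mp (by omega)
    exact Finset.univ_nonempty
  set Q := R ^ r with hQ
  have hpne : (Finset.univ : Finset (Fin N × Fin N)).Nonempty :=
    ⟨(hne.choose, hne.choose), mem_univ _⟩
  set δ := univ.inf' hpne (fun p : Fin N × Fin N => Q p.1 p.2) with hδdef
  have hδpos : 0 < δ := by
    rw [hδdef, Finset.lt_inf'_iff]
    exact fun p _ => hpos p.1 p.2
  have hδle : ∀ a b, δ ≤ Q a b := fun a b =>
    Finset.inf'_le _ (mem_univ (a, b))
  have hQ1 : ∀ i, ∑ v, Q i v = 1 := pow_row_sum R h1 r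
  have h2δ : 2 * δ ≤ 1 := by
    obtain ⟨a, b, hab⟩ : ∃ a b : Fin N, a ≠ b := by
      refine ⟨⟨0, by omega⟩, ⟨1, by omega⟩, ?_⟩
      simp [Fin.ext_iff]
    have hsub : ({a, b} : Finset (Fin N)) ⊆ univ := Finset.subset_univ _
    have : Q a a + Q a b ≤ ∑ v, Q a v := by
      rw [← Finset.sum_pair hab]
      exact Finset.sum_le_sum_of_subset_of_nonneg hsub
        (fun v _ _ => pow_nonneg_entries R h0 r a v)
    have := hQ1 a
    nlinarith [hδle a a, hδle a b]
  -- the column sequence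
  set x : ℕ → Fin N → ℝ := fun k i => (R ^ k) i j with hx
  have hstep : ∀ (s k : ℕ) (i : Fin N), x (s + k) i = ∑ v, (R ^ s) i v * x k v := by
    intro s k i
    rw [hx]
    simp only [pow_add, Matrix.mul_apply]
  set Ms : ℕ → ℝ := fun k => univ.sup' hne (x k) with hMs
  set ms : ℕ → ℝ := fun k => univ.inf' hne (x k) with hms
  have hle : ∀ k, ms k ≤ Ms k := fun k =>
    le_trans (Finset.inf'_le _ (mem_univ hne.choose)) (Finset.le_sup' _ (mem_univ hne.choose))
  have hManti : Antitone Ms := by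
    refine antitone_nat_of_succ_le fun k => ?_
    refine Finset.sup'_le _ _ fun i _ => ?_
    have := hstep 1 k i
    rw [pow_one] at this
    rw [show (1 : ℕ) + k = k + 1 from by omega] at this
    rw [this]
    exact (row_bounds hne R h0 h1 (x k) i).2
  have hmmono : Monotone ms := by
    refine monotone_nat_of_le_succ fun k => ?_
    refine Finset.le_inf' _ _ fun i _ => ?_
    have := hstep 1 k i
    rw [pow_one] at this
    rw [show (1 : ℕ) + k = k + 1 from by omega] at this
    rw [this]
    exact (row_bounds hne R h0 h1 (x k) i).1
  have hgapr : ∀ k, Ms (r + k) - ms (r + k) ≤ (1 - 2*δ) * (Ms k - ms k) := by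
    intro k
    have hMr : Ms (r + k) ≤ Ms k - δ * (Ms k - ms k) := by
      refine Finset.sup'_le _ _ fun i _ => ?_
      rw [hstep r k i]
      exact (row_contract hne Q (le_of_lt hδpos) hδle hQ1 (x k) i).1
    have hmr : ms k + δ * (Ms k - ms k) ≤ ms (r + k) := by
      refine Finset.le_inf' _ _ fun i _ => ?_
      rw [hstep r k i]
      exact (row_contract hne Q (le_of_lt hδpos) hδle hQ1 (x k) i).2
    linarith
  have hgap0 : ∀ k, 0 ≤ Ms k - ms k := fun k => sub_nonneg.mpr (hle k)
  have hgeo : ∀ k, Ms (k * r) - ms (k * r) ≤ (1 - 2*δ)^k * (Ms 0 - ms 0) := by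
    intro k
    induction k with
    | zero => simp
    | succ k ih =>
      have : (k+1) * r = r + k * r := by ring
      rw [this]
      calc Ms (r + k*r) - ms (r + k*r) ≤ (1 - 2*δ) * (Ms (k*r) - ms (k*r)) := hgapr _
      _ ≤ (1 - 2*δ) * ((1 - 2*δ)^k * (Ms 0 - ms 0)) :=
          mul_le_mul_of_nonneg_left ih (by linarith)
      _ = (1 - 2*δ)^(k+1) * (Ms 0 - ms 0) := by ring
  -- convergence of Ms and ms
  have hMbdd : BddBelow (Set.range Ms) :=
    ⟨ms 0, by rintro _ ⟨k, rfl⟩; exact le_trans (hmmono (Nat.zero_le k)) (hle k)⟩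
  have hmbdd : BddAbove (Set.range ms) :=
    ⟨Ms 0, by rintro _ ⟨k, rfl⟩; exact le_trans (hle k) (hManti (Nat.zero_le k))⟩
  have hMtend : Tendsto Ms atTop (nhds (⨅ k, Ms k)) := tendsto_atTop_ciInf hManti hMbdd
  have hmtend : Tendsto ms atTop (nhds (⨆ k, ms k)) := tendsto_atTop_ciSup hmmono hmbdd
  have hgaptend : Tendsto (fun k => Ms k - ms k) atTop (nhds ((⨅ k, Ms k) - ⨆ k, ms k)) :=
    hMtend.sub hmtend
  have hcomp : Tendsto (fun k : ℕ => k * r) atTop atTop :=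
    Filter.tendsto_atTop_atTop.mpr fun b => ⟨b, fun a ha => le_trans ha (Nat.le_mul_of_pos_right a hr)⟩
  have hsub1 : Tendsto (fun k => Ms (k*r) - ms (k*r)) atTop (nhds ((⨅ k, Ms k) - ⨆ k, ms k)) :=
    hgaptend.comp hcomp
  have hsub2 : Tendsto (fun k => Ms (k*r) - ms (k*r)) atTop (nhds 0) := by
    have hpow : Tendsto (fun k : ℕ => (1 - 2*δ)^k * (Ms 0 - ms 0)) atTop (nhds 0) := by
      have : Tendsto (fun k : ℕ => (1 - 2*δ)^k) atTop (nhds 0) :=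
        tendsto_pow_atTop_nhds_zero_of_lt_one (by linarith) (by linarith)
      simpa using this.mul_const (Ms 0 - ms 0)
    exact tendsto_of_tendsto_of_tendsto_of_le_of_le tendsto_const_nhds hpow
      (fun k => hgap0 _) (fun k => hgeo k)
  have heq : (⨅ k, Ms k) = (⨆ k, ms k) := by
    have := tendsto_nhds_unique hsub1 hsub2
    linarith
  refine ⟨⨅ k, Ms k, fun i => ?_⟩
  have hup : ∀ k, x k i ≤ Ms k := fun k => Finset.le_sup' _ (mem_univ i)
  have hlo : ∀ k, ms k ≤ x k i := fun k => Finset.inf'_le _ (mem_univ i)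
  have : Tendsto ms atTop (nhds (⨅ k, Ms k)) := by rw [heq]; exact hmtend
  exact tendsto_of_tendsto_of_tendsto_of_le_of_le this hMtend hlo hup




variable {N : ℕ} (G : SimpleGraph (Fin N)) [DecidableRel G.Adj]


lemma exists_odd_closed_walk (hconn : G.Connected) (hnb : ¬ G.Colorable 2) :
    ∃ (w : Fin N) (p : G.Walk w w), Odd p.length := by
  by_contra h
  push_neg at h
  have hne : Nonempty (Fin N) := hconn.nonempty
  obtain ⟨r⟩ := hne
  apply hnb
  have hcol : ∀ u v : Fin N, G.Adj u v → ¬ (Even (G.dist r u) ↔ Even (G.dist r v)) := by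
    intro u v huv heq
    obtain ⟨p, hp⟩ := (hconn r u).exists_walk_length_eq_dist
    obtain ⟨q, hq⟩ := (hconn r v).exists_walk_length_eq_dist
    have hodd : Odd ((p.append ((q.append (SimpleGraph.Walk.cons huv.symm SimpleGraph.Walk.nil)).reverse)).length) := by
      simp only [SimpleGraph.Walk.length_append, SimpleGraph.Walk.length_reverse,
        SimpleGraph.Walk.length_cons, SimpleGraph.Walk.length_nil, hp, hq]
      rw [Nat.odd_iff]
      rcases Nat.even_or_odd (G.dist r u) with he | ho
      · have hv : Even (G.dist r v) := heq.mp he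
        rw [Nat.even_iff] at he hv; omega
      · have hv : Odd (G.dist r v) := by
          rw [← Nat.not_even_iff_odd]
          exact fun hv => (Nat.not_even_iff_odd.mpr ho) (heq.mpr hv)
        rw [Nat.odd_iff] at ho hv; omega
    exact h r _ hodd
  -- build coloring
  refine ⟨SimpleGraph.Coloring.mk (fun v => if Even (G.dist r v) then (0 : Fin 2) else 1) ?_⟩
  intro u v huv
  have := hcol u v huv
  by_cases h1 : Even (G.dist r u) <;> by_cases h2 : Even (G.dist r v) <;>
    simp [h1, h2] <;> tauto



lemma two_le_N (hnb : ¬ G.Colorable 2) : 2 ≤ N := by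
  by_contra h
  push_neg at h
  apply hnb
  refine ⟨SimpleGraph.Coloring.mk (fun _ => 0) ?_⟩
  intro u v huv
  have : u = v := by omega
  exact absurd this huv.ne

lemma degree_pos (hconn : G.Connected) (hnb : ¬ G.Colorable 2) (v : Fin N) :
    0 < G.degree v := by
  rw [G.degree_pos_iff_exists_adj]
  have h2 : 2 ≤ N := two_le_N G hnb
  have : Nontrivial (Fin N) := Fin.nontrivial_iff_two_le.mpr h2
  obtain ⟨u, hu⟩ := exists_ne v
  obtain ⟨p⟩ := hconn v u
  cases p with
  | nil => exact absurd rfl hu.symm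
  | cons h q => exact ⟨_, h⟩

lemma pad_walk (hdeg : ∀ v, 0 < G.degree v) {i j : Fin N} (p : G.Walk i j) (m : ℕ) :
    ∃ q : G.Walk i j, q.length = p.length + 2 * m := by
  induction m with
  | zero => exact ⟨p, by omega⟩
  | succ m ih =>
    obtain ⟨q, hq⟩ := ih
    obtain ⟨x, hx⟩ := (G.degree_pos_iff_exists_adj j).mp (hdeg j)
    refine ⟨q.append (SimpleGraph.Walk.cons hx (SimpleGraph.Walk.cons hx.symm SimpleGraph.Walk.nil)), ?_⟩
    simp [SimpleGraph.Walk.length_append, hq]; omega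

lemma exists_uniform_length (hconn : G.Connected) (hnb : ¬ G.Colorable 2) :
    ∃ r : ℕ, 0 < r ∧ ∀ i j : Fin N, ∃ p : G.Walk i j, p.length = r := by
  obtain ⟨w, c, hc⟩ := exists_odd_closed_walk G hconn hnb
  have hdeg := degree_pos G hconn hnb
  -- for each pair, all large lengths achievable
  have key : ∀ i j : Fin N, ∃ B, ∀ n, B ≤ n → ∃ p : G.Walk i j, p.length = n := by
    intro i j
    obtain ⟨a⟩ := hconn i w
    obtain ⟨b⟩ := hconn w j
    set p0 := a.append b with hp0
    set p1 := a.append (c.append b) with hp1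
    refine ⟨p0.length + p1.length, fun n hn => ?_⟩
    have hlen : p1.length = p0.length + c.length := by
      simp [hp0, hp1, SimpleGraph.Walk.length_append]; omega
    have hcL : c.length % 2 = 1 := Nat.odd_iff.mp hc
    have hpar : (n - p0.length) % 2 = 0 ∨ (n - p1.length) % 2 = 0 := by omega
    rcases hpar with he | he
    · obtain ⟨q, hq⟩ := pad_walk G hdeg p0 ((n - p0.length) / 2)
      exact ⟨q, by omega⟩
    · obtain ⟨q, hq⟩ := pad_walk G hdeg p1 ((n - p1.length) / 2)
      exact ⟨q, by omega⟩
  choose B hB using key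
  refine ⟨1 + Finset.univ.sup (fun ij : Fin N × Fin N => B ij.1 ij.2), by omega, fun i j => ?_⟩
  exact hB i j _ (le_trans (Finset.le_sup (f := fun ij : Fin N × Fin N => B ij.1 ij.2) (Finset.mem_univ (i, j))) (by omega))


end Stmt11Aux

open Matrix

set_option maxHeartbeats 1000000 in
/-- For a connected non-bipartite graph, the entries of powers of the random walk matrix
converge to the stationary distribution: `lim_{k→∞} ((A_rw)^k)_{ij} = π_i`. -/
theorem stmt_11 {N : ℕ} (G : SimpleGraph (Fin N)) [DecidableRel G.Adj]
    (hconn : G.Connected) (hnb : ¬ G.Colorable 2) (i j : Fin N) :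
    Filter.Tendsto
      (fun k : ℕ =>
        ((G.adjMatrix ℝ * Matrix.diagonal fun v => ((G.degree v : ℝ))⁻¹) ^ k) i j)
      Filter.atTop (nhds ((G.degree i : ℝ) / ∑ v, (G.degree v : ℝ))) := by
  classical
  open Finset Filter Stmt11Aux in
  have hN : 2 ≤ N := two_le_N G hnb
  have hdeg : ∀ v, 0 < G.degree v := degree_pos G hconn hnb
  set d : Fin N → ℝ := fun v => (G.degree v : ℝ) with hd
  have hdpos : ∀ v, 0 < d v := fun v => by simp only [hd]; exact_mod_cast hdeg v
  have hdne : ∀ v, d v ≠ 0 := fun v => ne_of_gt (hdpos v)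
  set A : Matrix (Fin N) (Fin N) ℝ := G.adjMatrix ℝ with hA
  set Dinv : Matrix (Fin N) (Fin N) ℝ := Matrix.diagonal (fun v => (d v)⁻¹) with hDinv
  set Dd : Matrix (Fin N) (Fin N) ℝ := Matrix.diagonal d with hDd
  set R : Matrix (Fin N) (Fin N) ℝ := Dinv * A with hR
  have hRentry : ∀ a b, R a b = (d a)⁻¹ * A a b := by
    intro a b; rw [hR, hDinv, Matrix.diagonal_mul]
  have hrowA : ∀ a, ∑ b, A a b = d a := by
    intro a
    rw [hA, hd]
    simp only [SimpleGraph.adjMatrix_apply]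
    rw [Finset.sum_boole, SimpleGraph.degree, SimpleGraph.neighborFinset_eq_filter]
  have h0 : ∀ a b, 0 ≤ R a b := by
    intro a b
    rw [hRentry]
    refine mul_nonneg (inv_nonneg.mpr (le_of_lt (hdpos a))) ?_
    rw [hA]; simp [SimpleGraph.adjMatrix_apply]; positivity
  have h1 : ∀ a, ∑ b, R a b = 1 := by
    intro a
    simp only [hRentry]
    rw [← Finset.mul_sum, hrowA, inv_mul_cancel₀ (hdne a)]
  -- entry positivity from walks
  have hwalkpos : ∀ {a b : Fin N} (p : G.Walk a b), 0 < (R ^ p.length) a b := by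
    intro a b p
    induction p with
    | nil => simp [Matrix.one_apply]
    | @cons u v w h q ih =>
      rw [SimpleGraph.Walk.length_cons, pow_succ', Matrix.mul_apply]
      refine Finset.sum_pos' (fun t _ => mul_nonneg (h0 u t)
        (pow_nonneg_entries R h0 q.length t w)) ⟨v, Finset.mem_univ v, ?_⟩
      refine mul_pos ?_ ih
      rw [hRentry, hA]
      simp only [SimpleGraph.adjMatrix_apply, h, if_true]
      rw [mul_one]
      exact inv_pos.mpr (hdpos u)
  obtain ⟨r, hrpos, hwalks⟩ := exists_uniform_length G hconn hnb
  have hpos : ∀ a b, 0 < (R ^ r) a b := by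
    intro a b
    obtain ⟨p, hp⟩ := hwalks a b
    have := hwalkpos p
    rwa [hp] at this
  -- convergence of R powers
  have hLj : ∃ L : ℝ, ∀ a, Tendsto (fun k => (R ^ k) a j) atTop (nhds L) :=
    stochastic_pow_tendsto hN R h0 h1 r hrpos hpos j
  obtain ⟨L, hL⟩ := hLj
  -- identify L
  have hinv : ∀ v, ∑ a, d a * R a v = d v := by
    intro v
    have : ∀ a, d a * R a v = A a v := by
      intro a
      rw [hRentry, ← mul_assoc, mul_inv_cancel₀ (hdne a), one_mul]
    simp only [this]
    have hsym : ∀ a, A a v = A v a := by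
      intro a; rw [hA]; simp only [SimpleGraph.adjMatrix_apply]
      simp [G.adj_comm]
    simp only [hsym]
    exact hrowA v
  have hinvk : ∀ k, ∑ a, d a * (R ^ k) a j = d j := by
    intro k
    induction k with
    | zero => simp [Matrix.one_apply, Finset.sum_ite_eq', Finset.mem_univ]
    | succ k ih =>
      rw [pow_succ']
      simp only [Matrix.mul_apply, Finset.mul_sum]
      rw [Finset.sum_comm]
      calc ∑ w, ∑ a, d a * (R a w * (R ^ k) w j)
          = ∑ w, (∑ a, d a * R a w) * (R ^ k) w j := by
            congr 1; funext w; rw [Finset.sum_mul]; congr 1; funext a; ring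
        _ = ∑ w, d w * (R ^ k) w j := by simp only [hinv]
        _ = d j := ih
  set S : ℝ := ∑ v, d v with hS
  have hSpos : 0 < S := Finset.sum_pos (fun v _ => hdpos v) ⟨i, Finset.mem_univ i⟩
  have hLval : L = d j / S := by
    have ht1 : Tendsto (fun k => ∑ a, d a * (R ^ k) a j) atTop (nhds (∑ a, d a * L)) :=
      tendsto_finset_sum _ (fun a _ => (hL a).const_mul (d a))
    have ht2 : Tendsto (fun k => ∑ a, d a * (R ^ k) a j) atTop (nhds (d j)) := by
      simp only [hinvk]; exact tendsto_const_nhds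
    have := tendsto_nhds_unique ht1 ht2
    rw [← Finset.sum_mul] at this
    rw [← hS] at this
    field_simp
    linarith [this]
  -- conjugation
  set P : Matrix (Fin N) (Fin N) ℝ := A * Dinv with hP
  have hDD : Dd * Dinv = 1 := by
    rw [hDd, hDinv, Matrix.diagonal_mul_diagonal]
    convert Matrix.diagonal_one
    exact mul_inv_cancel₀ (hdne _)
  have hDD' : Dinv * Dd = 1 := by
    rw [hDd, hDinv, Matrix.diagonal_mul_diagonal]
    convert Matrix.diagonal_one
    exact inv_mul_cancel₀ (hdne _)
  have hconj : ∀ k, P ^ k = Dd * R ^ k * Dinv := by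
    intro k
    induction k with
    | zero => rw [pow_zero, pow_zero, mul_one, hDD]
    | succ k ih =>
      rw [pow_succ, ih, pow_succ, hP, hR]
      calc Dd * (R ^ k) * Dinv * (A * Dinv)
          = Dd * (R ^ k) * (Dinv * A) * Dinv := by
            rw [hDinv]
            noncomm_ring
        _ = Dd * ((R ^ k) * (Dinv * A)) * Dinv := by noncomm_ring
  have hPentry : ∀ k, (P ^ k) i j = d i * (R ^ k) i j * (d j)⁻¹ := by
    intro k
    rw [hconj k, hDd, hDinv, Matrix.mul_diagonal, Matrix.diagonal_mul]
  have hfinal : Tendsto (fun k => (P ^ k) i j) atTop (nhds (d i / S)) := by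
    have : Tendsto (fun k => d i * (R ^ k) i j * (d j)⁻¹) atTop
        (nhds (d i * L * (d j)⁻¹)) := ((hL i).const_mul (d i)).mul_const _
    rw [hLval] at this
    have heq : d i * (d j / S) * (d j)⁻¹ = d i / S := by
      field_simp [hdne j, ne_of_gt hSpos]
    rw [heq] at this
    simpa only [hPentry] using this
  exact hfinal
end

section
/- If all entries of V are nonnegative, sim(Q_i,K_t) > 0 for all i,t, and |((A_rw)^k)_{it} - π_i| ≤ η/N² for all i,t with η ∈ (0,1) and π_i ≥ 1/N², then whenever all denominators are nonzero, (1-η)/(1+η) ≤ STA_k(Q,K,V)_{ij} / SA(Q,K,V)_{ij} ≤ (1+η)/(1-η), where SA(Q,K,V)_{ij} = Σ_t π_i sim(Q_i,K_t)V_{tj} / Σ_t π_i sim(Q_i,K_t) and STA_k(Q,K,V)_{ij} = Σ_t ((A_rw)^k)_{it} sim(Q_i,K_t)V_{tj} / Σ_t ((A_rw)^k)_{it} sim(Q_i,K_t). -/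
open Matrix

/-- If `V` is entrywise nonnegative, `sim > 0`, `π_i ≥ 1/N²` and
`|((A_rw)^k)_{it} - π_i| ≤ η/N²` with `η ∈ (0,1)`, then whenever the denominators are
nonzero, `(1-η)/(1+η) ≤ STA_k(Q,K,V)_{ij} / SA(Q,K,V)_{ij} ≤ (1+η)/(1-η)`. -/
theorem stmt_17 {N : ℕ} (hN : 1 ≤ N) (A : Matrix (Fin N) (Fin N) ℝ)
    (hA : A.IsSymm) (hAnn : ∀ i j, 0 ≤ A i j)
    (d : Fin N → ℝ) (hdeg : ∀ i, d i = ∑ j, A i j) (hd : ∀ i, 0 < d i)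
    (k : ℕ) {dV : ℕ} (V : Matrix (Fin N) (Fin dV) ℝ) (hV : ∀ t c, 0 ≤ V t c)
    (sim : Fin N → Fin N → ℝ) (hsim : ∀ i t, 0 < sim i t)
    (η : ℝ) (hη0 : 0 < η) (hη1 : η < 1)
    (P : Matrix (Fin N) (Fin N) ℝ)
    (hP : P = (A * Matrix.diagonal fun v => (d v)⁻¹) ^ k)
    (pivec : Fin N → ℝ) (hpi : pivec = fun i => d i / ∑ j, d j)
    (hπlb : ∀ i, 1 / (N : ℝ) ^ 2 ≤ pivec i)
    (hclose : ∀ i t, |P i t - pivec i| ≤ η / (N : ℝ) ^ 2)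
    (i : Fin N) (j : Fin dV)
    (hden1 : (∑ t, pivec i * sim i t * V t j) ≠ 0)
    (hden2 : (∑ t, P i t * sim i t * V t j) ≠ 0) :
    (1 - η) / (1 + η) ≤
        ((∑ t, P i t * sim i t * V t j) / (∑ t, P i t * sim i t)) /
          ((∑ t, pivec i * sim i t * V t j) / (∑ t, pivec i * sim i t)) ∧
      ((∑ t, P i t * sim i t * V t j) / (∑ t, P i t * sim i t)) /
          ((∑ t, pivec i * sim i t * V t j) / (∑ t, pivec i * sim i t)) ≤
        (1 + η) / (1 - η) := by
  have hNpos : (0:ℝ) < (N:ℝ)^2 := by positivity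
  have hc : 0 < pivec i := lt_of_lt_of_le (by positivity) (hπlb i)
  -- entrywise bounds on P
  have hPb : ∀ t, (1 - η) * pivec i ≤ P i t ∧ P i t ≤ (1 + η) * pivec i := by
    intro t
    have h1 := hclose i t
    have h2 : η / (N:ℝ)^2 ≤ η * pivec i := by
      have := hπlb i
      calc η / (N:ℝ)^2 = η * (1 / (N:ℝ)^2) := by ring
        _ ≤ η * pivec i := by nlinarith
    rw [abs_le] at h1
    constructor <;> nlinarith [h1.1, h1.2]
  set NP := ∑ t, P i t * sim i t * V t j with hNP
  set Nπ := ∑ t, pivec i * sim i t * V t j with hNπ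
  set DP := ∑ t, P i t * sim i t with hDP
  set Dπ := ∑ t, pivec i * sim i t with hDπ
  have hNPlb : (1 - η) * Nπ ≤ NP := by
    rw [hNP, hNπ, Finset.mul_sum]
    refine Finset.sum_le_sum fun t _ => ?_
    have := (hPb t).1
    nlinarith [hsim i t, hV t j, mul_nonneg (hsim i t).le (hV t j)]
  have hNPub : NP ≤ (1 + η) * Nπ := by
    rw [hNP, hNπ, Finset.mul_sum]
    refine Finset.sum_le_sum fun t _ => ?_
    have := (hPb t).2
    nlinarith [hsim i t, hV t j, mul_nonneg (hsim i t).le (hV t j)]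
  have hDPlb : (1 - η) * Dπ ≤ DP := by
    rw [hDP, hDπ, Finset.mul_sum]
    refine Finset.sum_le_sum fun t _ => ?_
    have := (hPb t).1
    nlinarith [hsim i t]
  have hDPub : DP ≤ (1 + η) * Dπ := by
    rw [hDP, hDπ, Finset.mul_sum]
    refine Finset.sum_le_sum fun t _ => ?_
    have := (hPb t).2
    nlinarith [hsim i t]
  have hNπnn : 0 ≤ Nπ := Finset.sum_nonneg fun t _ =>
    mul_nonneg (mul_nonneg hc.le (hsim i t).le) (hV t j)
  have hNπ0 : 0 < Nπ := lt_of_le_of_ne hNπnn (Ne.symm hden1)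
  have hDπ0 : 0 < Dπ := Finset.sum_pos (fun t _ => mul_pos hc (hsim i t))
    (Finset.univ_nonempty_iff.mpr ⟨⟨0, hN⟩⟩)
  have hNP0 : 0 < NP := lt_of_lt_of_le (by nlinarith) hNPlb
  have hDP0 : 0 < DP := lt_of_lt_of_le (by nlinarith) hDPlb
  have hrw : (NP / DP) / (Nπ / Dπ) = (NP * Dπ) / (DP * Nπ) := by
    field_simp
  rw [hrw]
  constructor
  · rw [div_le_div_iff₀ (by linarith) (by positivity)]
    nlinarith [mul_pos hDπ0 hNπ0]
  · rw [div_le_div_iff₀ (by positivity) (by linarith)]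
    nlinarith [mul_pos hDπ0 hNπ0]
end
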